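/- arXiv:1101.3898 — 2 statements merged into one kernel-verified Lean document; each statement's English description precedes it below -/
import Mathlib

section
/- Let A be an n×n Hermitian matrix with spectrum in an interval J containing 0, f : J → ℝ convex with f(0) ≤ 0, and Φ : M_n(ℂ) → M_m(ℂ) a positive linear map with 0 < Φ(I_n) ≤ I_m. Then for every x ∈ ℂᵐ with ‖x‖ ≤ 1, f(⟨Φ(A)x, x⟩) ≤ ⟨Φ(f(A))x, x⟩. -/
open Matrix ComplexOrder

/-!
Write `A = ∑ λᵢ Pᵢ` with the spectral projections `Pᵢ` of `A`, so that `f(A) = ∑ f(λᵢ) Pᵢ`.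
The weights `wᵢ = ⟨Φ(Pᵢ)x, x⟩` are nonnegative by positivity of `Φ`, and they sum to
`⟨Φ(I)x, x⟩ ≤ ‖x‖² ≤ 1`. Both sides of the inequality are linear in these weights, and the
claim is Jensen's inequality for `w`, completed to a probability vector by the mass
`1 - ∑ wᵢ` placed at `0 ∈ J`, where `f(0) ≤ 0`.
-/

noncomputable def matFun {n : ℕ} (f : ℝ → ℝ) (A : Matrix (Fin n) (Fin n) ℂ) :
    Matrix (Fin n) (Fin n) ℂ :=
  if hA : A.IsHermitian then
    (hA.eigenvectorUnitary : Matrix (Fin n) (Fin n) ℂ) *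
      Matrix.diagonal (fun i => (f (hA.eigenvalues i) : ℂ)) *
      (hA.eigenvectorUnitary : Matrix (Fin n) (Fin n) ℂ)ᴴ
  else 0

/-- `lam A j` : the `j`-th largest eigenvalue (0-indexed) of a Hermitian matrix `A`. -/
noncomputable def lam {n : ℕ} (A : Matrix (Fin n) (Fin n) ℂ) (j : ℕ) : ℝ :=
  if hA : A.IsHermitian then
    if h : j < n then (hA.eigenvalues ∘ Tuple.sort hA.eigenvalues) ((⟨j, h⟩ : Fin n).rev)
    else 0
  else 0

/-- Loewner order. -/
def loewnerLE {n : ℕ} (A B : Matrix (Fin n) (Fin n) ℂ) : Prop := (B - A).PosSemidef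

/-- `|B| = (B^* B)^{1/2}`. -/
noncomputable def matAbs {n : ℕ} (B : Matrix (Fin n) (Fin n) ℂ) : Matrix (Fin n) (Fin n) ℂ :=
  (Matrix.posSemidef_conjTranspose_mul_self B).1.eigenvectorUnitary.1 *
    Matrix.diagonal ((↑) ∘ (√·) ∘ (Matrix.posSemidef_conjTranspose_mul_self B).1.eigenvalues) *
    (star (Matrix.posSemidef_conjTranspose_mul_self B).1.eigenvectorUnitary : Matrix (Fin n) (Fin n) ℂ)

/-- `|B|^r` via functional calculus. -/
noncomputable def matAbsPow {n : ℕ} (B : Matrix (Fin n) (Fin n) ℂ) (r : ℝ) :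
    Matrix (Fin n) (Fin n) ℂ :=
  matFun (fun t => t ^ r) (matAbs B)

section Jensen

variable {𝕜 E β ι : Type*} [Field 𝕜] [LinearOrder 𝕜] [IsStrictOrderedRing 𝕜] [AddCommGroup E]
  [AddCommGroup β] [PartialOrder β] [IsOrderedAddMonoid β] [Module 𝕜 E] [Module 𝕜 β]
  [IsStrictOrderedModule 𝕜 β] {s : Set E} {f : E → β} {t : Finset ι} {w : ι → 𝕜} {p : ι → E}

theorem ConvexOn.map_sum_le_of_sum_le_one (hf : ConvexOn 𝕜 s f) (hs : (0 : E) ∈ s)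
    (hf0 : f 0 ≤ 0) (h₀ : ∀ i ∈ t, 0 ≤ w i) (h₁ : ∑ i ∈ t, w i ≤ 1)
    (hmem : ∀ i ∈ t, p i ∈ s) : f (∑ i ∈ t, w i • p i) ≤ ∑ i ∈ t, w i • f (p i) := by
  have h := hf.map_add_sum_le h₀ (sub_add_cancel 1 _) hmem (sub_nonneg.2 h₁) hs
  rw [smul_zero, zero_add] at h
  exact h.trans (add_le_of_nonpos_left (smul_nonpos_of_nonneg_of_nonpos (sub_nonneg.2 h₁) hf0))

end Jensen

namespace Matrix

variable {n m ι : Type*} [Fintype n] [Fintype m] [Fintype ι] [DecidableEq n]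

theorem mul_diagonal_mul_conjTranspose_eq_sum (U : Matrix n n ℂ) (d : n → ℂ) :
    U * diagonal d * Uᴴ = ∑ i, d i • (U * single i i 1 * Uᴴ) := by
  rw [← sum_single_eq_diagonal, Finset.mul_sum, Finset.sum_mul]
  refine Finset.sum_congr rfl fun i _ => ?_
  have hi : single i i (d i) = d i • single i i (1 : ℂ) := by rw [smul_single, smul_eq_mul, mul_one]
  rw [hi, Matrix.mul_smul, Matrix.smul_mul]

namespace IsHermitian

variable {A : Matrix n n ℂ} (hA : A.IsHermitian)

noncomputable def spectralProj (i : n) : Matrix n n ℂ :=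
  (hA.eigenvectorUnitary : Matrix n n ℂ) * single i i 1 *
    (hA.eigenvectorUnitary : Matrix n n ℂ)ᴴ

theorem spectralProj_posSemidef (i : n) : (hA.spectralProj i).PosSemidef := by
  refine PosSemidef.mul_mul_conjTranspose_same ?_ _
  rw [← diagonal_single]
  refine posSemidef_diagonal_iff.2 fun j => ?_
  rcases eq_or_ne j i with rfl | h <;> simp [*]

theorem sum_spectralProj : ∑ i, hA.spectralProj i = 1 := by
  have h := mul_diagonal_mul_conjTranspose_eq_sum (hA.eigenvectorUnitary : Matrix n n ℂ) fun _ => 1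
  simp only [one_smul, diagonal_one, mul_one] at h
  rw [← Unitary.mul_star_self_of_mem hA.eigenvectorUnitary.2, star_eq_conjTranspose, h]
  rfl

theorem sum_eigenvalues_smul_spectralProj :
    ∑ i, (hA.eigenvalues i : ℂ) • hA.spectralProj i = A := by
  conv_rhs => rw [hA.spectral_theorem]
  exact (mul_diagonal_mul_conjTranspose_eq_sum _ _).symm

end IsHermitian

theorem re_star_dotProduct_mulVec_nonneg {M : Matrix m m ℂ} (hM : M.PosSemidef) (x : m → ℂ) :
    0 ≤ (star x ⬝ᵥ (M *ᵥ x)).re :=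
  (Complex.le_def.1 (hM.dotProduct_mulVec_nonneg x)).1

theorem re_star_dotProduct_sum_ofReal_smul_mulVec (M : ι → Matrix m m ℂ) (c : ι → ℝ)
    (x : m → ℂ) :
    (star x ⬝ᵥ ((∑ i, (c i : ℂ) • M i) *ᵥ x)).re = ∑ i, c i * (star x ⬝ᵥ (M i *ᵥ x)).re := by
  simp [sum_mulVec, dotProduct_sum, smul_mulVec, Complex.re_sum]

end Matrix

theorem matFun_eq_sum_smul_spectralProj {n : ℕ} {A : Matrix (Fin n) (Fin n) ℂ}
    (hA : A.IsHermitian) (f : ℝ → ℝ) :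
    matFun f A = ∑ i, (f (hA.eigenvalues i) : ℂ) • hA.spectralProj i := by
  rw [matFun, dif_pos hA]
  exact mul_diagonal_mul_conjTranspose_eq_sum _ _

theorem re_star_dotProduct_mulVec_le_norm_sq {m : ℕ} {B : Matrix (Fin m) (Fin m) ℂ}
    (hB : loewnerLE B 1) (x : EuclideanSpace ℂ (Fin m)) :
    (star (x : Fin m → ℂ) ⬝ᵥ (B *ᵥ (x : Fin m → ℂ))).re ≤ ‖x‖ ^ 2 := by
  have h := re_star_dotProduct_mulVec_nonneg hB (x : Fin m → ℂ)
  rw [sub_mulVec, one_mulVec, dotProduct_sub, Complex.sub_re, sub_nonneg] at h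
  rwa [← inner_self_eq_norm_sq (𝕜 := ℂ), EuclideanSpace.inner_eq_star_dotProduct,
    dotProduct_comm (x : Fin m → ℂ)]

theorem convex_positive_map_inner_le_general {n m : ℕ}
    (A : Matrix (Fin n) (Fin n) ℂ) (hA : A.IsHermitian)
    (J : Set ℝ) (h0 : (0 : ℝ) ∈ J) (f : ℝ → ℝ) (hf : ConvexOn ℝ J f) (hf0 : f 0 ≤ 0)
    (hspec : ∀ i, hA.eigenvalues i ∈ J)
    (Φ : Matrix (Fin n) (Fin n) ℂ →ₗ[ℂ] Matrix (Fin m) (Fin m) ℂ)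
    (hΦpos : ∀ B : Matrix (Fin n) (Fin n) ℂ, B.PosSemidef → (Φ B).PosSemidef)
    (hΦ1le : loewnerLE (Φ 1) 1)
    (x : EuclideanSpace ℂ (Fin m)) (hx : ‖x‖ ≤ 1) :
    f ((star (x : Fin m → ℂ) ⬝ᵥ (Φ A *ᵥ (x : Fin m → ℂ))).re) ≤
      (star (x : Fin m → ℂ) ⬝ᵥ (Φ (matFun f A) *ᵥ (x : Fin m → ℂ))).re := by
  set w : Fin n → ℝ := fun i => (star (x : Fin m → ℂ) ⬝ᵥ (Φ (hA.spectralProj i) *ᵥ x)).re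
  have hΦsum (c : Fin n → ℝ) :
      (star (x : Fin m → ℂ) ⬝ᵥ (Φ (∑ i, (c i : ℂ) • hA.spectralProj i) *ᵥ x)).re =
        ∑ i, w i • c i := by
    simp only [map_sum, map_smul, re_star_dotProduct_sum_ofReal_smul_mulVec, smul_eq_mul, w,
      mul_comm]
  have hw : ∀ i ∈ Finset.univ, 0 ≤ w i := fun i _ =>
    re_star_dotProduct_mulVec_nonneg (hΦpos _ (hA.spectralProj_posSemidef i)) _
  have hw1 : ∑ i, w i ≤ 1 := calc
    ∑ i, w i = (star (x : Fin m → ℂ) ⬝ᵥ (Φ 1 *ᵥ x)).re := by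
      simpa [hA.sum_spectralProj] using (hΦsum 1).symm
    _ ≤ ‖x‖ ^ 2 := re_star_dotProduct_mulVec_le_norm_sq hΦ1le x
    _ ≤ 1 := pow_le_one₀ (norm_nonneg x) hx
  calc f ((star (x : Fin m → ℂ) ⬝ᵥ (Φ A *ᵥ x)).re)
      = f (∑ i, w i • hA.eigenvalues i) := by
        conv_lhs => rw [← hA.sum_eigenvalues_smul_spectralProj, hΦsum]
    _ ≤ ∑ i, w i • f (hA.eigenvalues i) :=
        hf.map_sum_le_of_sum_le_one h0 hf0 hw hw1 fun i _ => hspec i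
    _ = (star (x : Fin m → ℂ) ⬝ᵥ (Φ (matFun f A) *ᵥ x)).re := by
        rw [matFun_eq_sum_smul_spectralProj hA, hΦsum]

/-- Lemma 2 of the paper: for a positive linear map `Φ` with `0 < Φ(Iₙ) ≤ Iₘ`, a
Hermitian `A` with spectrum in an interval `J ∋ 0` and `f` convex on `J` with
`f(0) ≤ 0`: `f(⟨Φ(A)x,x⟩) ≤ ⟨Φ(f(A))x,x⟩` for all `‖x‖ ≤ 1`. -/
theorem convex_positive_map_inner_le {n m : ℕ}
    (A : Matrix (Fin n) (Fin n) ℂ) (hA : A.IsHermitian)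
    (J : Set ℝ) (h0 : (0 : ℝ) ∈ J) (f : ℝ → ℝ) (hf : ConvexOn ℝ J f) (hf0 : f 0 ≤ 0)
    (hspec : ∀ i, hA.eigenvalues i ∈ J)
    (Φ : Matrix (Fin n) (Fin n) ℂ →ₗ[ℂ] Matrix (Fin m) (Fin m) ℂ)
    (hΦpos : ∀ B : Matrix (Fin n) (Fin n) ℂ, B.PosSemidef → (Φ B).PosSemidef)
    (hΦ1pos : (Φ 1).PosDef) (hΦ1le : loewnerLE (Φ 1) 1)
    (x : EuclideanSpace ℂ (Fin m)) (hx : ‖x‖ ≤ 1) :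
    f ((star (x : Fin m → ℂ) ⬝ᵥ (Φ A *ᵥ (x : Fin m → ℂ))).re) ≤
      (star (x : Fin m → ℂ) ⬝ᵥ (Φ (matFun f A) *ᵥ (x : Fin m → ℂ))).re :=
  convex_positive_map_inner_le_general A hA J h0 f hf hf0 hspec Φ hΦpos hΦ1le x hx
end

section
/- Let A₁, …, A_ℓ be Hermitian n×n matrices and X₁, …, X_ℓ ∈ M_n(ℂ) with ∑_i α_i X_i* X_i ≤ I_n for some α_i > 0. Let f : ℝ → ℝ be convex with f(0) ≤ 0 and f(uv) ≤ f(u)f(v) for all u, v ∈ ℝ. Then for each 1 ≤ k ≤ n, ∑_{j=1}^k λ_j(f(∑_i X_i* A_i X_i)) ≤ ∑_{j=1}^k λ_j(∑_i α_i f(α_i⁻¹) X_i* f(A_i) X_i). -/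
open Matrix ComplexOrder

/-!
For a vector `x` with `‖x‖ ≤ 1`, expanding `Xᵢ x` in an eigenbasis `(bᵢₘ)` of `Aᵢ` writes
`⟪x, (∑ Xᵢ* Aᵢ Xᵢ) x⟫ = ∑ qᵢₘ (αᵢ⁻¹ λₘ(Aᵢ))` with weights `qᵢₘ = αᵢ ‖⟪bᵢₘ, Xᵢ x⟫‖²` of total mass
`⟪x, (∑ αᵢ Xᵢ* Xᵢ) x⟫ ≤ 1`. Jensen's inequality for such sub-probability weights (this is where
`f 0 ≤ 0` enters), followed by `f (αᵢ⁻¹ λ) ≤ f αᵢ⁻¹ * f λ`, gives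
`f ⟪x, (∑ Xᵢ* Aᵢ Xᵢ) x⟫ ≤ ⟪x, (∑ αᵢ f(αᵢ⁻¹) Xᵢ* f(Aᵢ) Xᵢ) x⟫`.
Apply this to the `k` orthonormal eigenvectors of `T = ∑ Xᵢ* Aᵢ Xᵢ` at which `f ∘ λ(T)` is largest,
and compare both sides with Ky Fan's maximum principle: the sum of the `k` largest eigenvalues of a
Hermitian `H` bounds `∑ⱼ ⟪uⱼ, H uⱼ⟫` for every orthonormal `k`-family.
-/

open Finset
open scoped InnerProductSpace

lemma sum_mul_le_sum_of_forall_notMem_le {ι : Type*} [Fintype ι] (d w : ι → ℝ) (s : Finset ι)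
    (hd : ∀ a ∈ s, ∀ b ∉ s, d b ≤ d a) (hw0 : ∀ m, 0 ≤ w m) (hw1 : ∀ m, w m ≤ 1)
    (hw : ∑ m, w m = #s) :
    ∑ m, d m * w m ≤ ∑ m ∈ s, d m := by
  classical
  obtain ⟨t, hts, htc⟩ : ∃ t, (∀ a ∈ s, t ≤ d a) ∧ ∀ b ∉ s, d b ≤ t := by
    rcases s.eq_empty_or_nonempty with rfl | hs
    · exact ⟨⨆ m, d m, by simp, fun b _ => le_ciSup (Set.finite_range d).bddAbove b⟩
    · exact ⟨s.inf' hs d, fun a ha => inf'_le d ha,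
        fun b hb => le_inf' hs d fun a ha => hd a ha b hb⟩
  have hterm : ∀ m, (d m - t) * (w m - if m ∈ s then 1 else 0) ≤ 0 := by
    intro m
    split_ifs with hm
    · exact mul_nonpos_of_nonneg_of_nonpos (sub_nonneg.2 (hts m hm)) (by linarith [hw1 m])
    · exact mul_nonpos_of_nonpos_of_nonneg (sub_nonpos.2 (htc m hm)) (by linarith [hw0 m])
  have hsum : ∑ m, (d m - t) * (w m - if m ∈ s then 1 else 0) =
      ∑ m, d m * w m - ∑ m ∈ s, d m := by
    simp only [sub_mul, mul_sub, sum_sub_distrib, mul_ite, mul_one, mul_zero, sum_ite_mem,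
      univ_inter, ← mul_sum, hw, sum_const, nsmul_eq_mul]
    ring
  linarith [sum_nonpos fun m (_ : m ∈ univ) => hterm m]

theorem ConvexOn.map_sum_le_of_sum_le_one_s6 {E : Type*} [AddCommGroup E] [Module ℝ E] {C : Set E}
    {f : E → ℝ} (hf : ConvexOn ℝ C f) (h0 : (0 : E) ∈ C) (hf0 : f 0 ≤ 0) {ι : Type*}
    {s : Finset ι} {q : ι → ℝ} {t : ι → E} (hq : ∀ i ∈ s, 0 ≤ q i) (hq1 : ∑ i ∈ s, q i ≤ 1)
    (ht : ∀ i ∈ s, t i ∈ C) :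
    f (∑ i ∈ s, q i • t i) ≤ ∑ i ∈ s, q i * f (t i) := by
  have key := hf.map_add_sum_le hq (sub_add_cancel 1 _) ht (sub_nonneg.2 hq1) h0
  simp only [smul_zero, zero_add, smul_eq_mul] at key
  linarith [mul_nonpos_of_nonneg_of_nonpos (sub_nonneg.2 hq1) hf0]

section TopIndices

variable {n : ℕ}

noncomputable def topIndices (d : Fin n → ℝ) (k : ℕ) : Finset (Fin n) :=
  (univ.filter fun j : Fin n => (j : ℕ) < k).map (Fin.revPerm.trans (Tuple.sort d)).toEmbedding

lemma card_topIndices (d : Fin n → ℝ) (k : ℕ) : #(topIndices d k) = min k n := by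
  rw [topIndices, card_map, Fin.card_filter_val_lt, min_comm]

lemma le_of_mem_topIndices_of_notMem {d : Fin n → ℝ} {k : ℕ} {a b : Fin n}
    (ha : a ∈ topIndices d k) (hb : b ∉ topIndices d k) : d b ≤ d a := by
  set σ := Fin.revPerm.trans (Tuple.sort d)
  have hanti : Antitone (d ∘ σ) := (Tuple.monotone_sort d).comp_antitone Fin.rev_anti
  simp only [topIndices, mem_map_equiv, mem_filter, mem_univ, true_and, not_lt] at ha hb
  simpa [σ] using hanti (ha.le.trans hb)

lemma sum_range_lam_eq_sum_topIndices {H : Matrix (Fin n) (Fin n) ℂ} (hH : H.IsHermitian)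
    (k : ℕ) : ∑ j ∈ range k, lam H j = ∑ m ∈ topIndices hH.eigenvalues k, hH.eigenvalues m := by
  have hrange : (univ.filter fun j : Fin n => (j : ℕ) < k).map Fin.valEmbedding =
      (range k).filter (· < n) := by
    ext j
    simp only [mem_map, mem_filter, mem_univ, true_and, Fin.valEmbedding_apply, mem_range]
    exact ⟨fun ⟨i, hi, hij⟩ => hij ▸ ⟨hi, i.isLt⟩, fun ⟨hj, hjn⟩ => ⟨⟨j, hjn⟩, hj, rfl⟩⟩
  rw [topIndices, sum_map, ← sum_filter_of_ne (p := (· < n)) fun j _ h => ?_, ← hrange, sum_map]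
  · simp [lam, hH]
  · by_contra hj
    simp [lam, hH, hj] at h

end TopIndices

lemma dotProduct_conjTranspose_mul_mul_mulVec {m n R : Type*} [Fintype m] [Fintype n]
    [CommSemiring R] [StarRing R] (B : Matrix m n R) (M : Matrix m m R) (x : n → R) :
    star x ⬝ᵥ ((Bᴴ * M * B) *ᵥ x) = star (B *ᵥ x) ⬝ᵥ (M *ᵥ (B *ᵥ x)) := by
  rw [← mulVec_mulVec, ← mulVec_mulVec, dotProduct_mulVec, star_mulVec]

lemma re_star_dotProduct_self {𝕜 ι : Type*} [RCLike 𝕜] [Fintype ι] (x : EuclideanSpace 𝕜 ι) :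
    RCLike.re (star ⇑x ⬝ᵥ ⇑x) = ‖x‖ ^ 2 := by
  rw [dotProduct_comm, ← EuclideanSpace.inner_eq_star_dotProduct, inner_self_eq_norm_sq]

lemma sum_mul_norm_mulVec_sq_le_one {𝕜 ι κ : Type*} [RCLike 𝕜] [Fintype ι] [DecidableEq ι]
    [Fintype κ] {X : κ → Matrix ι ι 𝕜} {α : κ → ℝ}
    (hle : (1 - ∑ i, (α i : 𝕜) • ((X i)ᴴ * X i)).PosSemidef) {x : EuclideanSpace 𝕜 ι}
    (hx : ‖x‖ ≤ 1) :
    ∑ i, α i * ‖WithLp.toLp 2 (X i *ᵥ ⇑x)‖ ^ 2 ≤ 1 := by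
  have h := (RCLike.nonneg_iff.1 (hle.dotProduct_mulVec_nonneg ⇑x)).1
  have hXX : ∀ i, RCLike.re (star ⇑x ⬝ᵥ (((X i)ᴴ * X i) *ᵥ ⇑x)) =
      ‖WithLp.toLp 2 (X i *ᵥ ⇑x)‖ ^ 2 := fun i => by
    rw [← mulVec_mulVec, dotProduct_mulVec, ← star_mulVec]
    exact re_star_dotProduct_self (WithLp.toLp 2 (X i *ᵥ ⇑x))
  simp only [sub_mulVec, one_mulVec, dotProduct_sub, map_sub, sum_mulVec, dotProduct_sum,
    map_sum, smul_mulVec, dotProduct_smul, smul_eq_mul, RCLike.re_ofReal_mul,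
    re_star_dotProduct_self, hXX] at h
  nlinarith [norm_nonneg x]

section KyFan

variable {𝕜 : Type*} [RCLike 𝕜] {n : ℕ} {M : Matrix (Fin n) (Fin n) 𝕜}
  {b : OrthonormalBasis (Fin n) 𝕜 (EuclideanSpace 𝕜 (Fin n))} {d : Fin n → ℝ}

lemma dotProduct_mulVec_eq_sum_norm_inner_sq (hb : ∀ m, M *ᵥ ⇑(b m) = d m • ⇑(b m))
    (u : EuclideanSpace 𝕜 (Fin n)) :
    star ⇑u ⬝ᵥ (M *ᵥ ⇑u) = ((∑ m, d m * ‖⟪b m, u⟫_𝕜‖ ^ 2 : ℝ) : 𝕜) := by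
  calc star ⇑u ⬝ᵥ (M *ᵥ ⇑u) = ∑ m, star ⇑u ⬝ᵥ (M *ᵥ (⟪b m, u⟫_𝕜 • ⇑(b m))) := by
        conv_lhs => enter [2, 2]; rw [← b.sum_repr' u]
        simp only [WithLp.ofLp_sum, WithLp.ofLp_smul, mulVec_sum, dotProduct_sum]
    _ = ∑ m, (d m : 𝕜) * (‖⟪b m, u⟫_𝕜‖ : 𝕜) ^ 2 := by
        refine sum_congr rfl fun m _ => ?_
        rw [mulVec_smul, hb, dotProduct_smul, dotProduct_smul, dotProduct_comm,
          ← EuclideanSpace.inner_eq_star_dotProduct, ← inner_conj_symm, smul_eq_mul,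
          RCLike.real_smul_eq_coe_mul, mul_left_comm, RCLike.conj_mul, RCLike.norm_conj]
    _ = _ := by push_cast; rfl

lemma re_dotProduct_mulVec_eq_sum_norm_inner_sq (hb : ∀ m, M *ᵥ ⇑(b m) = d m • ⇑(b m))
    (u : EuclideanSpace 𝕜 (Fin n)) :
    RCLike.re (star ⇑u ⬝ᵥ (M *ᵥ ⇑u)) = ∑ m, d m * ‖⟪b m, u⟫_𝕜‖ ^ 2 := by
  rw [dotProduct_mulVec_eq_sum_norm_inner_sq hb, RCLike.ofReal_re]

lemma re_dotProduct_conjTranspose_mul_mul_mulVec_eq_sum (hb : ∀ m, M *ᵥ ⇑(b m) = d m • ⇑(b m))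
    {m : Type*} [Fintype m] (B : Matrix (Fin n) m 𝕜) (x : m → 𝕜) :
    RCLike.re (star x ⬝ᵥ ((Bᴴ * M * B) *ᵥ x)) =
      ∑ j, d j * ‖⟪b j, WithLp.toLp 2 (B *ᵥ x)⟫_𝕜‖ ^ 2 := by
  rw [dotProduct_conjTranspose_mul_mul_mulVec]
  exact re_dotProduct_mulVec_eq_sum_norm_inner_sq hb (WithLp.toLp 2 (B *ᵥ x))

-- Ky Fan's maximum principle, the inequality half.
theorem sum_re_dotProduct_mulVec_le_sum_topIndices (hb : ∀ m, M *ᵥ ⇑(b m) = d m • ⇑(b m))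
    {ι : Type*} {u : ι → EuclideanSpace 𝕜 (Fin n)} (hu : Orthonormal 𝕜 u) {s : Finset ι}
    {k : ℕ} (hs : #s = min k n) :
    ∑ j ∈ s, RCLike.re (star ⇑(u j) ⬝ᵥ (M *ᵥ ⇑(u j))) ≤ ∑ m ∈ topIndices d k, d m := by
  set w : Fin n → ℝ := fun m => ∑ j ∈ s, ‖⟪b m, u j⟫_𝕜‖ ^ 2
  have hw1 : ∀ m, w m ≤ 1 := fun m => by
    simpa [w, norm_inner_symm] using hu.sum_inner_products_le (x := b m) (s := s)
  have hw : ∑ m, w m = #(topIndices d k) := by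
    rw [sum_comm]
    simp [b.sum_sq_norm_inner_right, hu.norm_eq_one, hs, card_topIndices]
  calc ∑ j ∈ s, RCLike.re (star ⇑(u j) ⬝ᵥ (M *ᵥ ⇑(u j)))
      = ∑ m, d m * w m := by
        simp only [re_dotProduct_mulVec_eq_sum_norm_inner_sq hb, w, mul_sum]
        exact sum_comm
    _ ≤ ∑ m ∈ topIndices d k, d m :=
        sum_mul_le_sum_of_forall_notMem_le d w _
          (fun _ ha _ hb => le_of_mem_topIndices_of_notMem ha hb) (fun m => by positivity) hw1 hw

theorem sum_topIndices_eigenvalues_le (hM : M.IsHermitian)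
    (hb : ∀ m, M *ᵥ ⇑(b m) = d m • ⇑(b m)) (k : ℕ) :
    ∑ m ∈ topIndices hM.eigenvalues k, hM.eigenvalues m ≤ ∑ m ∈ topIndices d k, d m := by
  simp only [hM.eigenvalues_eq]
  exact sum_re_dotProduct_mulVec_le_sum_topIndices hb hM.eigenvectorBasis.orthonormal
    (card_topIndices _ k)

end KyFan

section FunctionalCalculus

variable {n : ℕ}

lemma isHermitian_matFun (g : ℝ → ℝ) (A : Matrix (Fin n) (Fin n) ℂ) :
    (matFun g A).IsHermitian := by
  unfold matFun
  split_ifs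
  · exact isHermitian_mul_mul_conjTranspose _ (isHermitian_diagonal_of_self_adjoint _
      (funext fun _ => Complex.conj_ofReal _))
  · exact isHermitian_zero

lemma matFun_mulVec_eigenvectorBasis {A : Matrix (Fin n) (Fin n) ℂ} (hA : A.IsHermitian)
    (g : ℝ → ℝ) (m : Fin n) :
    matFun g A *ᵥ ⇑(hA.eigenvectorBasis m) = g (hA.eigenvalues m) • ⇑(hA.eigenvectorBasis m) := by
  rw [matFun, dif_pos hA, ← mulVec_mulVec, ← star_eq_conjTranspose,
    hA.star_eigenvectorUnitary_mulVec, ← mulVec_mulVec, diagonal_mulVec_single, mul_one,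
    ← Complex.coe_smul, ← hA.eigenvectorUnitary_mulVec, ← mulVec_smul, ← Pi.single_smul,
    smul_eq_mul, mul_one]

end FunctionalCalculus

theorem map_re_dotProduct_sum_conjTranspose_mul_mul_mulVec_le {n ℓ : ℕ}
    {A X : Fin ℓ → Matrix (Fin n) (Fin n) ℂ} (hA : ∀ i, (A i).IsHermitian)
    {α : Fin ℓ → ℝ} (hα : ∀ i, 0 < α i) (hle : loewnerLE (∑ i, (α i : ℂ) • ((X i)ᴴ * X i)) 1)
    {f : ℝ → ℝ} (hf : ConvexOn ℝ Set.univ f) (hf0 : f 0 ≤ 0)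
    (hfmul : ∀ u v : ℝ, f (u * v) ≤ f u * f v) {x : EuclideanSpace ℂ (Fin n)} (hx : ‖x‖ ≤ 1) :
    f (RCLike.re (star ⇑x ⬝ᵥ ((∑ i, (X i)ᴴ * A i * X i) *ᵥ ⇑x))) ≤
      RCLike.re (star ⇑x ⬝ᵥ
        ((∑ i, ((α i * f (α i)⁻¹ : ℝ) : ℂ) • ((X i)ᴴ * matFun f (A i) * X i)) *ᵥ ⇑x)) := by
  set c : Fin ℓ → Fin n → ℝ := fun i m =>
    ‖⟪(hA i).eigenvectorBasis m, WithLp.toLp 2 (X i *ᵥ ⇑x)⟫_ℂ‖ ^ 2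
  have hquad : ∀ i {M : Matrix (Fin n) (Fin n) ℂ} {d : Fin n → ℝ},
      (∀ m, M *ᵥ ⇑((hA i).eigenvectorBasis m) = d m • ⇑((hA i).eigenvectorBasis m)) →
      RCLike.re (star ⇑x ⬝ᵥ (((X i)ᴴ * M * X i) *ᵥ ⇑x)) = ∑ m, d m * c i m :=
    fun i _ _ hb => re_dotProduct_conjTranspose_mul_mul_mulVec_eq_sum hb _ _
  have hweights : ∑ i, ∑ m, α i * c i m ≤ 1 := by
    simpa only [c, ← mul_sum, OrthonormalBasis.sum_sq_norm_inner_right] using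
      sum_mul_norm_mulVec_sq_le_one hle hx
  have hq : ∀ p : Fin ℓ × Fin n, 0 ≤ α p.1 * c p.1 p.2 := fun p =>
    mul_nonneg (hα _).le (by positivity)
  calc f (RCLike.re (star ⇑x ⬝ᵥ ((∑ i, (X i)ᴴ * A i * X i) *ᵥ ⇑x)))
      = f (∑ p : Fin ℓ × Fin n,
          (α p.1 * c p.1 p.2) • ((α p.1)⁻¹ * (hA p.1).eigenvalues p.2)) := by
        congr 1
        simp only [sum_mulVec, dotProduct_sum, map_sum, hquad _ (hA _).mulVec_eigenvectorBasis,
          Fintype.sum_prod_type, smul_eq_mul]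
        refine sum_congr rfl fun i _ => sum_congr rfl fun m _ => ?_
        field_simp [(hα i).ne']
    _ ≤ ∑ p : Fin ℓ × Fin n, (α p.1 * c p.1 p.2) * f ((α p.1)⁻¹ * (hA p.1).eigenvalues p.2) :=
        hf.map_sum_le_of_sum_le_one_s6 (Set.mem_univ _) hf0 (fun p _ => hq p)
          (by rwa [Fintype.sum_prod_type]) fun _ _ => Set.mem_univ _
    _ ≤ ∑ p : Fin ℓ × Fin n,
          (α p.1 * c p.1 p.2) * (f (α p.1)⁻¹ * f ((hA p.1).eigenvalues p.2)) :=
        sum_le_sum fun p _ => mul_le_mul_of_nonneg_left (hfmul _ _) (hq p)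
    _ = _ := by
        simp only [sum_mulVec, dotProduct_sum, map_sum, smul_mulVec, dotProduct_smul,
          Complex.coe_smul, RCLike.smul_re, hquad _ (matFun_mulVec_eigenvectorBasis (hA _) f),
          Fintype.sum_prod_type, mul_sum]
        exact sum_congr rfl fun i _ => sum_congr rfl fun m _ => by ring

theorem eigenvalue_sum_convex_congruence_general {n ℓ : ℕ}
    (A X : Fin ℓ → Matrix (Fin n) (Fin n) ℂ) (hA : ∀ i, (A i).IsHermitian)
    (α : Fin ℓ → ℝ) (hα : ∀ i, 0 < α i)
    (hle : loewnerLE (∑ i, (α i : ℂ) • ((X i)ᴴ * X i)) 1)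
    (f : ℝ → ℝ) (hf : ConvexOn ℝ Set.univ f) (hf0 : f 0 ≤ 0)
    (hfmul : ∀ u v : ℝ, f (u * v) ≤ f u * f v)
    (k : ℕ) :
    ∑ j ∈ Finset.range k, lam (matFun f (∑ i, (X i)ᴴ * A i * X i)) j ≤
      ∑ j ∈ Finset.range k,
        lam (∑ i, ((α i * f (α i)⁻¹ : ℝ) : ℂ) • ((X i)ᴴ * matFun f (A i) * X i)) j := by
  have hT : (∑ i, (X i)ᴴ * A i * X i).IsHermitian :=
    isSelfAdjoint_sum _ fun i _ => isHermitian_conjTranspose_mul_mul _ (hA i)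
  have hS : (∑ i, ((α i * f (α i)⁻¹ : ℝ) : ℂ) • ((X i)ᴴ * matFun f (A i) * X i)).IsHermitian :=
    isSelfAdjoint_sum _ fun i _ =>
      (isHermitian_conjTranspose_mul_mul _ (isHermitian_matFun f _)).smul (Complex.conj_ofReal _)
  set b := hT.eigenvectorBasis
  rw [sum_range_lam_eq_sum_topIndices (isHermitian_matFun f _),
    sum_range_lam_eq_sum_topIndices hS]
  calc _ ≤ ∑ m ∈ topIndices (fun m => f (hT.eigenvalues m)) k, f (hT.eigenvalues m) :=
        sum_topIndices_eigenvalues_le _ (matFun_mulVec_eigenvectorBasis hT f) k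
    _ ≤ ∑ m ∈ topIndices (fun m => f (hT.eigenvalues m)) k, RCLike.re (star ⇑(b m) ⬝ᵥ
          ((∑ i, ((α i * f (α i)⁻¹ : ℝ) : ℂ) • ((X i)ᴴ * matFun f (A i) * X i)) *ᵥ ⇑(b m))) :=
        sum_le_sum fun m _ => by
          rw [hT.eigenvalues_eq]
          exact map_re_dotProduct_sum_conjTranspose_mul_mul_mulVec_le hA hα hle hf hf0 hfmul
            (b.orthonormal.1 m).le
    _ ≤ _ := sum_re_dotProduct_mulVec_le_sum_topIndices hS.mulVec_eigenvectorBasis b.orthonormal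
          (card_topIndices _ k)

/-- **Corollary (generalization of Kittaneh–Manasrah).** If `∑ αᵢ Xᵢ* Xᵢ ≤ Iₙ` with
`αᵢ > 0`, `Aᵢ` Hermitian, and `f : ℝ → ℝ` is convex with `f(0) ≤ 0` and
`f(uv) ≤ f(u)f(v)`, then for `1 ≤ k ≤ n`:
`∑_{j=1}^k λⱼ(f(∑ Xᵢ* Aᵢ Xᵢ)) ≤ ∑_{j=1}^k λⱼ(∑ αᵢ f(αᵢ⁻¹) Xᵢ* f(Aᵢ) Xᵢ)`. -/
theorem eigenvalue_sum_convex_congruence {n ℓ : ℕ}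
    (A X : Fin ℓ → Matrix (Fin n) (Fin n) ℂ) (hA : ∀ i, (A i).IsHermitian)
    (α : Fin ℓ → ℝ) (hα : ∀ i, 0 < α i)
    (hle : loewnerLE (∑ i, (α i : ℂ) • ((X i)ᴴ * X i)) 1)
    (f : ℝ → ℝ) (hf : ConvexOn ℝ Set.univ f) (hf0 : f 0 ≤ 0)
    (hfmul : ∀ u v : ℝ, f (u * v) ≤ f u * f v)
    (k : ℕ) (hk1 : 1 ≤ k) (hkn : k ≤ n) :
    ∑ j ∈ Finset.range k, lam (matFun f (∑ i, (X i)ᴴ * A i * X i)) j ≤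
      ∑ j ∈ Finset.range k,
        lam (∑ i, ((α i * f (α i)⁻¹ : ℝ) : ℂ) • ((X i)ᴴ * matFun f (A i) * X i)) j :=
  eigenvalue_sum_convex_congruence_general A X hA α hα hle f hf hf0 hfmul k
end
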